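/- Let S be a finite nonempty set, c a cost function, {i,j} ∈ binom(S,2), and S' = S∖{j}. Define c' on binom(S',3) ∪ binom(S',2) ∪ {∅} by: c'_{pqr} = c_{pqr} for {p,q,r} ∈ binom(S'∖{i},3); c'_{pqi} = c_{pqi} + c_{pqj} for {p,q} ∈ binom(S'∖{i},2); c'_{pq} = c_{pq} for {p,q} ∈ binom(S'∖{i},2); c'_{pi} = c_{pi} + c_{pj} + c_{pij} for p ∈ S'∖{i}; and c'_∅ = c_∅ + c_{ij}. Let X_S|_{x_{ij}=1} = {x ∈ X_S : x_{ij} = 1} and let φ_{ij} : X_S|_{x_{ij}=1} → X_{S'} be the map with φ_{ij}(x)_{pi} = x_{pi} for p ∈ S'∖{i} and φ_{ij}(x)_{pq} = x_{pq} for {p,q} ∈ binom(S'∖{i},2). Then min{ φ_c(x) : x ∈ X_S|_{x_{ij}=1} } = min{ φ_{c'}(x) : x ∈ X_{S'} }, and if x* minimizes φ_c over X_S|_{x_{ij}=1}, then φ_{ij}(x*) minimizes φ_{c'} over X_{S'}. -/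
import Mathlib


open Finset

/-- `binom(S,2)`: the set of 2-element subsets (unordered pairs) of the ground set. -/
def pairs (V : Type*) [Fintype V] [DecidableEq V] : Finset (Finset V) :=
  (univ : Finset V).powersetCard 2

/-- `binom(S,3)`: the set of 3-element subsets (unordered triples) of the ground set. -/
def triples (V : Type*) [Fintype V] [DecidableEq V] : Finset (Finset V) :=
  (univ : Finset V).powersetCard 3

/-- The feasible set `X_S`: maps `x : binom(S,2) → {0,1}` satisfying the triangle
inequalities `x_{pq} + x_{qr} - x_{pr} ≤ 1` for all pairwise distinct `p, q, r`. -/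
def feasible {V : Type*} [Fintype V] [DecidableEq V] (x : Finset V → ℝ) : Prop :=
  (∀ e ∈ pairs V, x e = 0 ∨ x e = 1) ∧
    ∀ p q r : V, p ≠ q → q ≠ r → p ≠ r →
      x {p, q} + x {q, r} - x {p, r} ≤ 1

/-- The cubic objective
`φ_c(x) = Σ_{{p,q,r}} c_{pqr} x_{pq} x_{pr} x_{qr} + Σ_{{p,q}} c_{pq} x_{pq} + c_∅`. -/
def obj {V : Type*} [Fintype V] [DecidableEq V] (c x : Finset V → ℝ) : ℝ :=
  ∑ t ∈ triples V, c t * ∏ e ∈ t.powersetCard 2, x e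
    + ∑ e ∈ pairs V, c e * x e + c ∅

/-- `δ(R)`: the pairs having exactly one element in `R`. -/
def cut {V : Type*} [Fintype V] [DecidableEq V] (R : Finset V) : Finset (Finset V) :=
  (pairs V).filter fun e => (e ∩ R).card = 1

/-- `T_{P'}`: the triples having some 2-element subset in `P'`. -/
def Tof {V : Type*} [Fintype V] [DecidableEq V] (P' : Finset (Finset V)) :
    Finset (Finset V) :=
  (triples V).filter fun t => ∃ e ∈ t.powersetCard 2, e ∈ P'

/-- The feasible set `X_T` for a subset `T` of the ground set. -/
def feasibleOn {V : Type*} [DecidableEq V] (T : Finset V) (x : Finset V → ℝ) : Prop :=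
  (∀ e ∈ T.powersetCard 2, x e = 0 ∨ x e = 1) ∧
    ∀ p ∈ T, ∀ q ∈ T, ∀ r ∈ T, p ≠ q → q ≠ r → p ≠ r →
      x {p, q} + x {q, r} - x {p, r} ≤ 1

/-- The cubic objective `φ_c` on `X_T` for a subset `T` of the ground set. -/
def objOn {V : Type*} [DecidableEq V] (T : Finset V) (c x : Finset V → ℝ) : ℝ :=
  ∑ t ∈ T.powersetCard 3, c t * ∏ e ∈ t.powersetCard 2, x e
    + ∑ e ∈ T.powersetCard 2, c e * x e + c ∅

section Aux
variable {V : Type*} [DecidableEq V]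

lemma sum_pc_insert (s : Finset V) {a : V} (ha : a ∉ s) (n : ℕ) (f : Finset V → ℝ) :
    ∑ e ∈ (insert a s).powersetCard (n+1), f e
      = ∑ e ∈ s.powersetCard (n+1), f e + ∑ e ∈ s.powersetCard n, f (insert a e) := by
  rw [Finset.powersetCard_succ_insert ha, Finset.sum_union, Finset.sum_image]
  · intro e₁ h₁ e₂ h₂ h
    have h₁' := (Finset.mem_powersetCard.1 h₁).1
    have h₂' := (Finset.mem_powersetCard.1 h₂).1
    have : a ∉ e₁ := fun hc => ha (h₁' hc)
    have ha2 : a ∉ e₂ := fun hc => ha (h₂' hc)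
    rw [← Finset.erase_insert this, ← Finset.erase_insert ha2, h]
  · rw [Finset.disjoint_left]
    intro e he hme
    obtain ⟨e', -, rfl⟩ := Finset.mem_image.1 hme
    exact ha ((Finset.mem_powersetCard.1 he).1 (Finset.mem_insert_self a e'))

omit [DecidableEq V] in
lemma sum_pc_one (s : Finset V) (f : Finset V → ℝ) :
    ∑ e ∈ s.powersetCard 1, f e = ∑ p ∈ s, f {p} := by
  rw [Finset.powersetCard_one, Finset.sum_map]
  rfl

lemma sum_pc3_insert {s : Finset V} {a : V} (ha : a ∉ s) (f : Finset V → ℝ) :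
    ∑ e ∈ (insert a s).powersetCard 3, f e
      = ∑ e ∈ s.powersetCard 3, f e + ∑ e ∈ s.powersetCard 2, f (insert a e) :=
  sum_pc_insert s ha 2 f

lemma sum_pc2_insert {s : Finset V} {a : V} (ha : a ∉ s) (f : Finset V → ℝ) :
    ∑ e ∈ (insert a s).powersetCard 2, f e
      = ∑ e ∈ s.powersetCard 2, f e + ∑ p ∈ s, f (insert a {p}) := by
  rw [sum_pc_insert s ha 1 f, sum_pc_one]

lemma pc_two_triple {p q r : V} (hpq : p ≠ q) (hpr : p ≠ r) (hqr : q ≠ r) :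
    ({p, q, r} : Finset V).powersetCard 2 = {{p, q}, {p, r}, {q, r}} := by
  ext e
  simp only [Finset.mem_powersetCard, Finset.mem_insert, Finset.mem_singleton]
  constructor
  · rintro ⟨hsub, hcard⟩
    obtain ⟨a, b, hab, rfl⟩ := Finset.card_eq_two.1 hcard
    have ha := hsub (Finset.mem_insert_self a {b})
    have hb : b ∈ ({p, q, r} : Finset V) := hsub (by simp)
    simp only [Finset.mem_insert, Finset.mem_singleton] at ha hb
    rcases ha with rfl | rfl | rfl <;> rcases hb with rfl | rfl | rfl <;>
      first
      | exact absurd rfl hab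
      | exact Or.inl rfl
      | exact Or.inr (Or.inl rfl)
      | exact Or.inr (Or.inr rfl)
      | exact Or.inl (Finset.pair_comm _ _)
      | exact Or.inr (Or.inl (Finset.pair_comm _ _))
      | exact Or.inr (Or.inr (Finset.pair_comm _ _))
  · rintro (rfl | rfl | rfl) <;>
      refine ⟨fun v hv => ?_, Finset.card_pair (by assumption)⟩ <;>
      · simp only [Finset.mem_insert, Finset.mem_singleton] at hv ⊢
        tauto

lemma prod_pc_triple (x : Finset V → ℝ) {p q r : V} (hpq : p ≠ q) (hpr : p ≠ r) (hqr : q ≠ r) :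
    ∏ e ∈ ({p, q, r} : Finset V).powersetCard 2, x e = x {p, q} * x {p, r} * x {q, r} := by
  rw [pc_two_triple hpq hpr hqr]
  have h1 : ({p, q} : Finset V) ∉ ({{p, r}, {q, r}} : Finset (Finset V)) := by
    simp only [Finset.mem_insert, Finset.mem_singleton]
    rintro (h | h)
    · have : q ∈ ({p, r} : Finset V) := h ▸ (by simp)
      simp only [Finset.mem_insert, Finset.mem_singleton] at this
      tauto
    · have : p ∈ ({q, r} : Finset V) := h ▸ (by simp)
      simp only [Finset.mem_insert, Finset.mem_singleton] at this
      tauto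
  have h2 : ({p, r} : Finset V) ∉ ({{q, r}} : Finset (Finset V)) := by
    simp only [Finset.mem_singleton]
    intro h
    have : p ∈ ({q, r} : Finset V) := h ▸ (by simp)
    simp only [Finset.mem_insert, Finset.mem_singleton] at this
    tauto
  rw [Finset.prod_insert h1, Finset.prod_insert h2, Finset.prod_singleton, mul_assoc]

lemma obj_eq_objOn [Fintype V] (c c' : Finset V → ℝ) (i j : V) (hij : i ≠ j)
    (hc3 : ∀ t ∈ (((univ : Finset V).erase j).erase i).powersetCard 3, c' t = c t)
    (hc3i : ∀ e ∈ (((univ : Finset V).erase j).erase i).powersetCard 2,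
      c' (insert i e) = c (insert i e) + c (insert j e))
    (hc2 : ∀ e ∈ (((univ : Finset V).erase j).erase i).powersetCard 2, c' e = c e)
    (hc2i : ∀ p ∈ ((univ : Finset V).erase j).erase i,
      c' {p, i} = c {p, i} + c {p, j} + c {p, i, j})
    (hc0 : c' ∅ = c ∅ + c {i, j})
    (x : Finset V → ℝ) (hx : feasible x) (h1 : x {i, j} = 1) :
    obj c x = objOn ((univ : Finset V).erase j) c' x := by
  classical
  set S' := (univ : Finset V).erase j with hS'def
  set T0 := S'.erase i with hT0def
  have hjS' : j ∉ S' := Finset.notMem_erase _ _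
  have hiS' : i ∈ S' := Finset.mem_erase.2 ⟨hij, Finset.mem_univ _⟩
  have hiT0 : i ∉ T0 := Finset.notMem_erase _ _
  have hU : (univ : Finset V) = insert j S' := (Finset.insert_erase (Finset.mem_univ j)).symm
  have hS' : S' = insert i T0 := (Finset.insert_erase hiS').symm
  have hT0mem : ∀ p ∈ T0, p ≠ i ∧ p ≠ j := fun p hp =>
    ⟨Finset.ne_of_mem_erase hp, Finset.ne_of_mem_erase (Finset.mem_of_mem_erase hp)⟩
  have h01 : ∀ a b : V, a ≠ b → x {a, b} = 0 ∨ x {a, b} = 1 := by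
    intro a b hab
    exact hx.1 _ (Finset.mem_powersetCard.2 ⟨Finset.subset_univ _, Finset.card_pair hab⟩)
  have hA : ∀ p, p ≠ i → p ≠ j → x {p, i} = x {p, j} := by
    intro p hpi hpj
    have t1 := hx.2 p i j hpi hij hpj
    have t2 := hx.2 p j i hpj (Ne.symm hij) hpi
    rw [Finset.pair_comm j i] at t2
    rw [h1] at t1 t2
    linarith
  -- decompositions
  have HL3 : ∑ t ∈ (univ : Finset V).powersetCard 3, c t * ∏ e ∈ t.powersetCard 2, x e
      = (∑ t ∈ T0.powersetCard 3, c t * ∏ e ∈ t.powersetCard 2, x e)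
      + (∑ e ∈ T0.powersetCard 2, c (insert i e) * ∏ f ∈ (insert i e).powersetCard 2, x f)
      + (∑ e ∈ T0.powersetCard 2, c (insert j e) * ∏ f ∈ (insert j e).powersetCard 2, x f)
      + (∑ p ∈ T0, c (insert j (insert i {p})) *
          ∏ f ∈ Finset.powersetCard 2 (insert j (insert i {p})), x f) := by
    rw [hU, sum_pc3_insert hjS', hS', sum_pc3_insert hiT0, sum_pc2_insert hiT0]
    ring
  have HL2 : ∑ e ∈ (univ : Finset V).powersetCard 2, c e * x e
      = (∑ e ∈ T0.powersetCard 2, c e * x e)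
      + (∑ p ∈ T0, c (insert i {p}) * x (insert i {p}))
      + (∑ p ∈ T0, c (insert j {p}) * x (insert j {p}))
      + c (insert j {i}) * x (insert j {i}) := by
    rw [hU, sum_pc2_insert hjS', hS', sum_pc2_insert hiT0, Finset.sum_insert hiT0]
    ring
  have HR3 : ∑ t ∈ S'.powersetCard 3, c' t * ∏ e ∈ t.powersetCard 2, x e
      = (∑ t ∈ T0.powersetCard 3, c' t * ∏ e ∈ t.powersetCard 2, x e)
      + (∑ e ∈ T0.powersetCard 2, c' (insert i e) * ∏ f ∈ (insert i e).powersetCard 2, x f) := by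
    rw [hS', sum_pc3_insert hiT0]
  have HR2 : ∑ e ∈ S'.powersetCard 2, c' e * x e
      = (∑ e ∈ T0.powersetCard 2, c' e * x e)
      + (∑ p ∈ T0, c' (insert i {p}) * x (insert i {p})) := by
    rw [hS', sum_pc2_insert hiT0]
  -- term matching
  have E1 : ∑ t ∈ T0.powersetCard 3, c' t * ∏ e ∈ t.powersetCard 2, x e
      = ∑ t ∈ T0.powersetCard 3, c t * ∏ e ∈ t.powersetCard 2, x e :=
    Finset.sum_congr rfl fun t ht => by rw [hc3 t ht]
  have E2 : ∑ e ∈ T0.powersetCard 2, c' (insert i e) * ∏ f ∈ (insert i e).powersetCard 2, x f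
      = (∑ e ∈ T0.powersetCard 2, c (insert i e) * ∏ f ∈ (insert i e).powersetCard 2, x f)
      + (∑ e ∈ T0.powersetCard 2, c (insert j e) * ∏ f ∈ (insert j e).powersetCard 2, x f) := by
    rw [← Finset.sum_add_distrib]
    refine Finset.sum_congr rfl fun e he => ?_
    obtain ⟨hsub, hcard⟩ := Finset.mem_powersetCard.1 he
    obtain ⟨p, q, hpq, rfl⟩ := Finset.card_eq_two.1 hcard
    obtain ⟨hpi, hpj⟩ := hT0mem p (hsub (by simp))
    obtain ⟨hqi, hqj⟩ := hT0mem q (hsub (by simp))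
    have Pi : ∏ f ∈ ({i, p, q} : Finset V).powersetCard 2, x f = x {i, p} * x {i, q} * x {p, q} :=
      prod_pc_triple x (Ne.symm hpi) (Ne.symm hqi) hpq
    have Pj : ∏ f ∈ ({j, p, q} : Finset V).powersetCard 2, x f = x {j, p} * x {j, q} * x {p, q} :=
      prod_pc_triple x (Ne.symm hpj) (Ne.symm hqj) hpq
    have exp : x {j, p} = x {i, p} := by
      rw [Finset.pair_comm j p, Finset.pair_comm i p, ← hA p hpi hpj]
    have exq : x {j, q} = x {i, q} := by
      rw [Finset.pair_comm j q, Finset.pair_comm i q, ← hA q hqi hqj]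
    show c' (insert i {p, q}) * _ = _
    rw [hc3i _ he]
    show (c (insert i {p, q}) + c (insert j {p, q})) * ∏ f ∈ ({i, p, q} : Finset V).powersetCard 2, x f
      = c (insert i {p, q}) * ∏ f ∈ ({i, p, q} : Finset V).powersetCard 2, x f
      + c (insert j {p, q}) * ∏ f ∈ ({j, p, q} : Finset V).powersetCard 2, x f
    rw [Pi, Pj, exp, exq]
    ring
  have E3 : ∑ e ∈ T0.powersetCard 2, c' e * x e = ∑ e ∈ T0.powersetCard 2, c e * x e :=
    Finset.sum_congr rfl fun e he => by rw [hc2 e he]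
  have E4 : ∑ p ∈ T0, c' (insert i {p}) * x (insert i {p})
      = (∑ p ∈ T0, c (insert i {p}) * x (insert i {p}))
      + (∑ p ∈ T0, c (insert j {p}) * x (insert j {p}))
      + (∑ p ∈ T0, c (insert j (insert i {p})) *
          ∏ f ∈ Finset.powersetCard 2 (insert j (insert i {p})), x f) := by
    rw [← Finset.sum_add_distrib, ← Finset.sum_add_distrib]
    refine Finset.sum_congr rfl fun p hp => ?_
    obtain ⟨hpi, hpj⟩ := hT0mem p hp
    have hset : ({j, i, p} : Finset V) = {p, i, j} := by
      ext v; simp only [Finset.mem_insert, Finset.mem_singleton]; tauto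
    have Pji : ∏ f ∈ ({j, i, p} : Finset V).powersetCard 2, x f
        = x {j, i} * x {j, p} * x {i, p} :=
      prod_pc_triple x (Ne.symm hij) (Ne.symm hpj) (Ne.symm hpi)
    have hji : x {j, i} = 1 := by rw [Finset.pair_comm j i]; exact h1
    have exp : x {j, p} = x {i, p} := by
      rw [Finset.pair_comm j p, Finset.pair_comm i p, ← hA p hpi hpj]
    have hsq : x {i, p} * x {i, p} = x {i, p} := by
      rcases h01 i p (Ne.symm hpi) with h | h <;> rw [h] <;> ring
    rw [Pji, hji, exp, hset, Finset.pair_comm i p, Finset.pair_comm j p, hc2i p hp]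
    rcases h01 p i hpi with h | h <;> rw [h] <;> ring
  have E5 : c (insert j {i}) * x (insert j {i}) = c {i, j} := by
    have : (insert j {i} : Finset V) = {i, j} := Finset.pair_comm j i
    rw [this, h1, mul_one]
  show _ + _ + c ∅ = _ + _ + c' ∅
  rw [show triples V = (univ : Finset V).powersetCard 3 from rfl,
      show pairs V = (univ : Finset V).powersetCard 2 from rfl]
  rw [HL3, HL2, HR3, HR2, E1, E2, E3, E4, E5, hc0]
  ring

lemma objOn_congr (T : Finset V) (c : Finset V → ℝ) {x y : Finset V → ℝ}
    (h : ∀ e ∈ T.powersetCard 2, x e = y e) : objOn T c x = objOn T c y := by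
  unfold objOn
  congr 2
  · refine Finset.sum_congr rfl fun t ht => ?_
    have hsub := (Finset.mem_powersetCard.1 ht).1
    refine congrArg _ (Finset.prod_congr rfl fun e he => ?_)
    obtain ⟨h1, h2⟩ := Finset.mem_powersetCard.1 he
    exact h e (Finset.mem_powersetCard.2 ⟨h1.trans hsub, h2⟩)
  · exact Finset.sum_congr rfl fun e he => by rw [h e he]

lemma obj_congr [Fintype V] (c : Finset V → ℝ) {x y : Finset V → ℝ}
    (h : ∀ e ∈ pairs V, x e = y e) : obj c x = obj c y :=
  objOn_congr (univ : Finset V) c h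

lemma obj_eq_objOn_univ [Fintype V] (c x : Finset V → ℝ) :
    obj c x = objOn (univ : Finset V) c x := rfl

lemma feasible_restrict [Fintype V] {x : Finset V → ℝ} (hx : feasible x) (j : V) :
    feasibleOn ((univ : Finset V).erase j) x := by
  constructor
  · intro e he
    obtain ⟨h1, h2⟩ := Finset.mem_powersetCard.1 he
    exact hx.1 e (Finset.mem_powersetCard.2 ⟨Finset.subset_univ _, h2⟩)
  · intro p _ q _ r _ hpq hqr hpr
    exact hx.2 p q r hpq hqr hpr

/-- The extension of a feasible point on `S' = univ.erase j` to a feasible point on `V`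
with `x {i,j} = 1`. -/
noncomputable def extendPt (i j : V) (y : Finset V → ℝ) : Finset V → ℝ :=
  fun e => if e = {i, j} then 1 else if j ∈ e then y (insert i (e.erase j)) else y e

lemma extendPt_spec [Fintype V] (i j : V) (hij : i ≠ j) (y : Finset V → ℝ)
    (hy : feasibleOn ((univ : Finset V).erase j) y) :
    feasible (extendPt i j y) ∧ extendPt i j y {i, j} = 1 ∧
      ∀ e ∈ ((univ : Finset V).erase j).powersetCard 2, extendPt i j y e = y e := by
  classical
  set S' := (univ : Finset V).erase j with hS'def
  have hmemS' : ∀ a : V, a ≠ j → a ∈ S' := fun a ha => Finset.mem_erase.2 ⟨ha, Finset.mem_univ _⟩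
  have hv1 : extendPt i j y {i, j} = 1 := if_pos rfl
  have hv2 : ∀ e : Finset V, j ∉ e → extendPt i j y e = y e := by
    intro e hje
    have hne : e ≠ {i, j} := fun h => hje (h ▸ (by simp))
    simp only [extendPt, if_neg hne, if_neg hje]
  have hv3 : ∀ p, p ≠ i → p ≠ j → extendPt i j y {p, j} = y {i, p} := by
    intro p hpi hpj
    have hne : ({p, j} : Finset V) ≠ {i, j} := by
      intro h
      have : p ∈ ({i, j} : Finset V) := h ▸ (by simp)
      simp only [Finset.mem_insert, Finset.mem_singleton] at this
      tauto
    have hjmem : j ∈ ({p, j} : Finset V) := by simp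
    have herase : ({p, j} : Finset V).erase j = {p} := by
      rw [Finset.pair_comm p j, Finset.erase_insert (Finset.notMem_singleton.2 (Ne.symm hpj))]
    simp only [extendPt, if_neg hne, if_pos hjmem, herase]
  have h01 : ∀ a b : V, a ≠ b → a ≠ j → b ≠ j →
      y {a, b} = 0 ∨ y {a, b} = 1 := by
    intro a b hab haj hbj
    refine hy.1 _ (Finset.mem_powersetCard.2 ⟨?_, Finset.card_pair hab⟩)
    intro v hv
    simp only [Finset.mem_insert, Finset.mem_singleton] at hv
    rcases hv with rfl | rfl
    exacts [hmemS' _ haj, hmemS' _ hbj]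
  have htri := hy.2
  refine ⟨⟨?_, ?_⟩, hv1, fun e he => hv2 e (fun hje =>
    (Finset.mem_erase.1 ((Finset.mem_powersetCard.1 he).1 hje)).1 rfl)⟩
  · -- 0/1 values
    intro e he
    obtain ⟨-, hcard⟩ := Finset.mem_powersetCard.1 he
    obtain ⟨a, b, hab, rfl⟩ := Finset.card_eq_two.1 hcard
    by_cases hbj : b = j
    · have haj : a ≠ j := fun h => hab (h.trans hbj.symm)
      rw [hbj]
      by_cases hai : a = i
      · rw [hai]; right; exact hv1
      · rw [hv3 a hai haj]
        exact h01 i a (fun h => hai h.symm) hij haj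
    · by_cases haj : a = j
      · rw [haj, Finset.pair_comm j b]
        by_cases hbi : b = i
        · rw [hbi]; right; exact hv1
        · rw [hv3 b hbi hbj]
          exact h01 i b (fun h => hbi h.symm) hij hbj
      · rw [hv2 _ (by simp only [Finset.mem_insert, Finset.mem_singleton]; tauto)]
        exact h01 a b hab haj hbj
  · -- triangle inequalities
    intro p q r hpq hqr hpr
    have key : ∀ a b : V, a ≠ b → a ≠ j → b ≠ j → extendPt i j y {a, b} = y {a, b} := by
      intro a b hab haj hbj
      exact hv2 _ (by simp only [Finset.mem_insert, Finset.mem_singleton]; tauto)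
    have hy1 : ∀ a : V, a ≠ i → a ≠ j → y {i, a} ≤ 1 ∧ 0 ≤ y {i, a} := by
      intro a hai haj
      rcases h01 i a (fun h => hai h.symm) hij haj with h | h <;> rw [h] <;> norm_num
    by_cases hpj : p = j
    · rw [hpj]
      have hqj : q ≠ j := fun h => hpq (hpj.trans h.symm)
      have hrj : r ≠ j := fun h => hpr (hpj.trans h.symm)
      rw [Finset.pair_comm j q, Finset.pair_comm j r]
      by_cases hqi : q = i
      · rw [hqi, hv1]
        have hri : r ≠ i := fun h => hqr (hqi.trans h.symm)
        rw [hv3 r hri hrj, key i r (fun h => hri h.symm) hij hrj]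
        linarith
      · by_cases hri : r = i
        · rw [hri, hv1, hv3 q hqi hqj, key q i hqi hqj hij]
          rw [Finset.pair_comm q i]
          have := (hy1 q hqi hqj).1
          linarith
        · rw [hv3 q hqi hqj, hv3 r hri hrj, key q r hqr hqj hrj]
          have := htri i (hmemS' i hij) q (hmemS' q hqj) r (hmemS' r hrj)
            (fun h => hqi h.symm) hqr (fun h => hri h.symm)
          linarith
    · by_cases hqj : q = j
      · rw [hqj]
        have hrj : r ≠ j := fun h => hqr (hqj.trans h.symm)
        rw [Finset.pair_comm j r]
        by_cases hpi : p = i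
        · rw [hpi, hv1]
          have hri : r ≠ i := fun h => hpr (hpi.trans h.symm)
          rw [hv3 r hri hrj, key i r (fun h => hri h.symm) hij hrj]
          linarith
        · by_cases hri : r = i
          · rw [hri, hv1, hv3 p hpi hpj, key p i hpi hpj hij]
            rw [Finset.pair_comm p i]
            linarith
          · rw [hv3 p hpi hpj, hv3 r hri hrj, key p r hpr hpj hrj]
            have := htri p (hmemS' p hpj) i (hmemS' i hij) r (hmemS' r hrj)
              hpi (fun h => hri h.symm) hpr
            rw [Finset.pair_comm p i] at this
            linarith
      · by_cases hrj : r = j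
        · rw [hrj]
          by_cases hpi : p = i
          · rw [hpi]
            have hqi : q ≠ i := fun h => hpq (hpi.trans h.symm)
            rw [hv1, hv3 q hqi hqj, key i q (fun h => hqi h.symm) hij hqj]
            have := (hy1 q hqi hqj).1
            linarith
          · by_cases hqi : q = i
            · rw [hqi, hv1, hv3 p hpi hpj, key p i hpi hpj hij]
              rw [Finset.pair_comm p i]
              linarith
            · rw [hv3 q hqi hqj, hv3 p hpi hpj, key p q hpq hpj hqj]
              have := htri p (hmemS' p hpj) q (hmemS' q hqj) i (hmemS' i hij)
                hpq (fun h => hqi h) hpi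
              rw [Finset.pair_comm q i, Finset.pair_comm p i] at this
              linarith
        · rw [key p q hpq hpj hqj, key q r hqr hqj hrj, key p r hpr hpj hrj]
          exact htri p (hmemS' p hpj) q (hmemS' q hqj) r (hmemS' r hrj) hpq hqr hpr
end Aux

/--
Let `S` be a finite nonempty set, `c` a cost function,
`{i,j} ∈ binom(S,2)`, and `S' = S∖{j}`.  Define `c'` by
`c'_{pqr} = c_{pqr}` for `{p,q,r} ∈ binom(S'∖{i},3)`;
`c'_{pqi} = c_{pqi} + c_{pqj}` for `{p,q} ∈ binom(S'∖{i},2)`;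
`c'_{pq} = c_{pq}` for `{p,q} ∈ binom(S'∖{i},2)`;
`c'_{pi} = c_{pi} + c_{pj} + c_{pij}` for `p ∈ S'∖{i}`; and `c'_∅ = c_∅ + c_{ij}`.
Then `min{ φ_c(x) : x ∈ X_S, x_{ij} = 1 } = min{ φ_{c'}(x) : x ∈ X_{S'} }`, and if `x*`
minimizes `φ_c` over `X_S|_{x_{ij}=1}` then `φ_{ij}(x*)` minimizes `φ_{c'}` over `X_{S'}`.
(Here the map `φ_{ij}` is the restriction of `x*` to the pairs within `S'`, which in this
encoding is `x*` itself, read on `binom(S',2)`.)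
-/
theorem contraction_cost_adjustment {V : Type*} [Fintype V] [DecidableEq V] [Nonempty V]
    (c c' : Finset V → ℝ) (i j : V) (hij : i ≠ j)
    (hc3 : ∀ t ∈ (((univ : Finset V).erase j).erase i).powersetCard 3, c' t = c t)
    (hc3i : ∀ e ∈ (((univ : Finset V).erase j).erase i).powersetCard 2,
      c' (insert i e) = c (insert i e) + c (insert j e))
    (hc2 : ∀ e ∈ (((univ : Finset V).erase j).erase i).powersetCard 2, c' e = c e)
    (hc2i : ∀ p ∈ ((univ : Finset V).erase j).erase i,
      c' {p, i} = c {p, i} + c {p, j} + c {p, i, j})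
    (hc0 : c' ∅ = c ∅ + c {i, j}) :
    (∃ m : ℝ,
      IsLeast {v : ℝ | ∃ x : Finset V → ℝ, feasible x ∧ x {i, j} = 1 ∧ v = obj c x} m ∧
      IsLeast {v : ℝ | ∃ x : Finset V → ℝ, feasibleOn ((univ : Finset V).erase j) x ∧
        v = objOn ((univ : Finset V).erase j) c' x} m) ∧
    ∀ xstar : Finset V → ℝ, feasible xstar → xstar {i, j} = 1 →
      (∀ x : Finset V → ℝ, feasible x → x {i, j} = 1 → obj c xstar ≤ obj c x) →
      feasibleOn ((univ : Finset V).erase j) xstar ∧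
        ∀ x : Finset V → ℝ, feasibleOn ((univ : Finset V).erase j) x →
          objOn ((univ : Finset V).erase j) c' xstar ≤
            objOn ((univ : Finset V).erase j) c' x := by
  classical
  have KEY := obj_eq_objOn c c' i j hij hc3 hc3i hc2 hc2i hc0
  have EXT := extendPt_spec (V := V) i j hij
  have hset : {v : ℝ | ∃ x : Finset V → ℝ, feasibleOn ((univ : Finset V).erase j) x ∧
        v = objOn ((univ : Finset V).erase j) c' x}
      = {v : ℝ | ∃ x : Finset V → ℝ, feasible x ∧ x {i, j} = 1 ∧ v = obj c x} := by
    ext v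
    constructor
    · rintro ⟨y, hy, rfl⟩
      obtain ⟨hfeas, h1, hagree⟩ := EXT y hy
      refine ⟨extendPt i j y, hfeas, h1, ?_⟩
      rw [KEY _ hfeas h1]
      exact (objOn_congr _ c' hagree).symm
    · rintro ⟨x, hx, h1, rfl⟩
      exact ⟨x, feasible_restrict hx j, KEY x hx h1⟩
  have hne : {v : ℝ | ∃ x : Finset V → ℝ, feasible x ∧ x {i, j} = 1 ∧ v = obj c x}.Nonempty := by
    have h0 : feasibleOn ((univ : Finset V).erase j) (fun _ => (0 : ℝ)) :=
      ⟨fun e _ => Or.inl rfl, by intro p _ q _ r _ _ _ _; norm_num⟩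
    obtain ⟨hf, h1, -⟩ := EXT _ h0
    exact ⟨obj c (extendPt i j fun _ => 0), _, hf, h1, rfl⟩
  have hfin : {v : ℝ | ∃ x : Finset V → ℝ, feasible x ∧ x {i, j} = 1 ∧ v = obj c x}.Finite := by
    apply Set.Finite.subset (Finset.finite_toSet
      ((univ : Finset (Finset (Finset V))).image
        (fun A => obj c (fun e => if e ∈ A then (1 : ℝ) else 0))))
    rintro v ⟨x, hx, -, rfl⟩
    refine Finset.mem_coe.2 (Finset.mem_image.2
      ⟨(pairs V).filter (fun e => x e = 1), Finset.mem_univ _, ?_⟩)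
    refine obj_congr c ?_
    intro e he
    rcases hx.1 e he with h | h
    · have hnm : e ∉ (pairs V).filter (fun e => x e = 1) := by
        intro hc
        have := (Finset.mem_filter.1 hc).2
        rw [h] at this
        norm_num at this
      rw [if_neg hnm, h]
    · rw [if_pos (Finset.mem_filter.2 ⟨he, h⟩), h]
  have hne' : hfin.toFinset.Nonempty := (Set.Finite.toFinset_nonempty hfin).2 hne
  have hleast : IsLeast {v : ℝ | ∃ x : Finset V → ℝ, feasible x ∧ x {i, j} = 1 ∧ v = obj c x}
      (hfin.toFinset.min' hne') :=
    ⟨hfin.mem_toFinset.1 (Finset.min'_mem _ _),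
      fun v hv => Finset.min'_le _ v (hfin.mem_toFinset.2 hv)⟩
  refine ⟨⟨hfin.toFinset.min' hne', hleast, by rw [hset]; exact hleast⟩, ?_⟩
  intro xstar hxs hxs1 hmin
  refine ⟨feasible_restrict hxs j, ?_⟩
  intro y hy
  obtain ⟨hf, h1, hagree⟩ := EXT y hy
  calc objOn ((univ : Finset V).erase j) c' xstar
      = obj c xstar := (KEY xstar hxs hxs1).symm
    _ ≤ obj c (extendPt i j y) := hmin _ hf h1
    _ = objOn ((univ : Finset V).erase j) c' (extendPt i j y) := KEY _ hf h1
    _ = objOn ((univ : Finset V).erase j) c' y := objOn_congr _ c' hagree
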